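/- There exists a constant c > 0 such that for every integer n ≥ 1 and every integer p ≥ 1, T(n,p) ≤ c·C(p)·n^{−5/2}·(12√3)^n. -/

import Mathlib

/-- The number of rooted type I triangulations of the p-gon with n inner vertices:
T(n,p) = 4^{n−1}·p·(2p)!·(2p+3n−5)!! / ((p!)²·n!·(2p+n−1)!!). -/
noncomputable def Tfun (n p : ℕ) : ℝ :=
  4 ^ (n - 1) * p * (Nat.factorial (2 * p) : ℝ) *
      (Nat.doubleFactorial (2 * p + 3 * n - 5) : ℝ) /
    (((Nat.factorial p : ℝ)) ^ 2 * (Nat.factorial n : ℝ) *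
      (Nat.doubleFactorial (2 * p + n - 1) : ℝ))

/-- The constant C(p) = 3^{p−2}·p·(2p)! / (4·√(2π)·(p!)²). -/
noncomputable def Cfun (p : ℕ) : ℝ :=
  (3 : ℝ) ^ ((p : ℤ) - 2) * p * (Nat.factorial (2 * p) : ℝ) /
    (4 * Real.sqrt (2 * Real.pi) * ((Nat.factorial p : ℝ)) ^ 2)

/-!
Going from `p` to `p + 1` multiplies `C(p)` by `3` times the change of `p (2p)! / (p!)²`, and
`T(n,p)` by the same change times `(2p+3n-3)/(2p+n+1) ≤ 3`; so `T(n,p)/C(p)` is largest at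
`p = 1`. For `p = 1` the bound is proved for the squares, where `n^{-5/2}` becomes `n^{-5}` and
`(12√3)² = 16·27`: the square of a ratio of double factorials `(a+2k)‼/a‼` is at most the
corresponding ratio of factorials `(a+2k+1)!/(a+1)!`, and `(3n)!/(n!)³ ≤ (4/9)·27ⁿ/(n+1)`
holds by induction, because `(3n+1)(3n+2)(n+2) ≤ 9(n+1)³`.
-/

open Nat Real

theorem doubleFactorial_add_two_mul_sq_mul_factorial_le (a k : ℕ) :
    (a + 2 * k)‼ ^ 2 * (a + 1)! ≤ (a + 2 * k + 1)! * a‼ ^ 2 := by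
  induction k with
  | zero => rw [Nat.mul_zero, Nat.add_zero, mul_comm]
  | succ k ih =>
    have hsq : (a + 2 * k + 2) ^ 2 ≤ (a + 2 * k + 3) * (a + 2 * k + 2) := by nlinarith
    calc (a + 2 * (k + 1))‼ ^ 2 * (a + 1)!
        = (a + 2 * k + 2) ^ 2 * ((a + 2 * k)‼ ^ 2 * (a + 1)!) := by
          rw [show a + 2 * (k + 1) = a + 2 * k + 2 by ring, Nat.doubleFactorial_add_two]; ring
      _ ≤ (a + 2 * k + 3) * (a + 2 * k + 2) * ((a + 2 * k + 1)! * a‼ ^ 2) := by gcongr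
      _ = (a + 2 * (k + 1) + 1)! * a‼ ^ 2 := by
          rw [show a + 2 * (k + 1) + 1 = a + 2 * k + 2 + 1 by ring,
            Nat.factorial_succ (a + 2 * k + 2), Nat.factorial_succ (a + 2 * k + 1)]; ring

theorem nine_mul_factorial_three_mul_mul_succ_le {n : ℕ} (hn : 1 ≤ n) :
    9 * (3 * n)! * (n + 1) ≤ 4 * 27 ^ n * n ! ^ 3 := by
  induction n, hn using Nat.le_induction with
  | base => decide
  | succ n _ ih =>
    have hpoly : (3 * n + 1) * (3 * n + 2) * (n + 2) ≤ 9 * (n + 1) ^ 3 := by nlinarith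
    calc 9 * (3 * (n + 1))! * (n + 1 + 1)
        = 9 * (3 * n)! * (n + 1) * (3 * ((3 * n + 1) * (3 * n + 2) * (n + 2))) := by
          rw [show 3 * (n + 1) = 3 * n + 1 + 1 + 1 by ring, Nat.factorial_succ,
            Nat.factorial_succ, Nat.factorial_succ]; ring
      _ ≤ 4 * 27 ^ n * n ! ^ 3 * (3 * (9 * (n + 1) ^ 3)) := by gcongr
      _ = 4 * 27 ^ (n + 1) * (n + 1)! ^ 3 := by rw [Nat.factorial_succ]; ring

theorem doubleFactorial_add_two_mul_mul_le {a b : ℕ} (h : b ≤ 3 * a + 4) (k : ℕ) :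
    (b + 2 * k)‼ * a‼ ≤ 3 ^ k * b‼ * (a + 2 * k)‼ := by
  induction k with
  | zero => simp
  | succ k ih =>
    have hstep : b + 2 * k + 2 ≤ 3 * (a + 2 * k + 2) := by omega
    calc (b + 2 * (k + 1))‼ * a‼ = (b + 2 * k + 2) * ((b + 2 * k)‼ * a‼) := by
          rw [show b + 2 * (k + 1) = b + 2 * k + 2 by ring, Nat.doubleFactorial_add_two]; ring
      _ ≤ 3 * (a + 2 * k + 2) * (3 ^ k * b‼ * (a + 2 * k)‼) := by gcongr
      _ = 3 ^ (k + 1) * b‼ * (a + 2 * (k + 1))‼ := by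
          rw [show a + 2 * (k + 1) = a + 2 * k + 2 by ring, Nat.doubleFactorial_add_two]; ring

theorem Tfun_succ_succ (m q : ℕ) :
    Tfun (m + 1) (q + 1) = 4 ^ m / (m + 1)! * ((q + 1) * (2 * (q + 1))! / (q + 1)! ^ 2) *
      ((3 * m + 2 * q)‼ / (m + 2 + 2 * q)‼) := by
  rw [Tfun, show 2 * (q + 1) + 3 * (m + 1) - 5 = 3 * m + 2 * q by omega,
    show 2 * (q + 1) + (m + 1) - 1 = m + 2 + 2 * q by omega, Nat.add_sub_cancel]
  push_cast
  ring

theorem Cfun_succ (q : ℕ) :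
    Cfun (q + 1) = 3 ^ q / (12 * √(2 * π)) * ((q + 1) * (2 * (q + 1))! / (q + 1)! ^ 2) := by
  rw [Cfun, show ((q + 1 : ℕ) : ℤ) - 2 = (q : ℤ) - 1 by push_cast; ring,
    zpow_sub₀ (by norm_num), zpow_natCast, zpow_one]
  push_cast
  ring

theorem Tfun_mul_Cfun_one_le {n p : ℕ} (hn : 1 ≤ n) (hp : 1 ≤ p) :
    Tfun n p * Cfun 1 ≤ Tfun n 1 * Cfun p := by
  obtain ⟨m, rfl⟩ := Nat.exists_eq_add_of_le' hn
  obtain ⟨q, rfl⟩ := Nat.exists_eq_add_of_le' hp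
  have hratio : ((3 * m + 2 * q)‼ / (m + 2 + 2 * q)‼ : ℝ) ≤
      3 ^ q * ((3 * m + 2 * 0)‼ / (m + 2 + 2 * 0)‼) := by
    have h := doubleFactorial_add_two_mul_mul_le (a := m + 2) (b := 3 * m) (by omega) q
    rw [Nat.mul_zero, Nat.add_zero, Nat.add_zero, ← mul_div_assoc,
      div_le_div_iff₀ (by positivity) (by positivity)]
    exact_mod_cast h
  rw [← Nat.zero_add 1, Tfun_succ_succ, Tfun_succ_succ, Cfun_succ, Cfun_succ]
  calc _ = 4 ^ m / (m + 1)! * ((q + 1) * (2 * (q + 1))! / (q + 1)! ^ 2) *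
        ((0 + 1) * (2 * (0 + 1))! / (0 + 1)! ^ 2) / (12 * √(2 * π)) *
        ((3 * m + 2 * q)‼ / (m + 2 + 2 * q)‼ : ℝ) := by ring
    _ ≤ 4 ^ m / (m + 1)! * ((q + 1) * (2 * (q + 1))! / (q + 1)! ^ 2) *
        ((0 + 1) * (2 * (0 + 1))! / (0 + 1)! ^ 2) / (12 * √(2 * π)) *
        (3 ^ q * ((3 * m + 2 * 0)‼ / (m + 2 + 2 * 0)‼)) := by gcongr
    _ = _ := by ring

-- `T(m+1,1)² · 36 (m+1)⁵ ≤ 432^(m+1)` with the denominators cleared.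
theorem doubleFactorial_three_mul_sq_le (m : ℕ) :
    144 * 16 ^ m * (3 * m)‼ ^ 2 * (m + 1) ^ 5 ≤
      432 ^ (m + 1) * (m + 1)! ^ 2 * (m + 2)‼ ^ 2 := by
  have hsq := doubleFactorial_add_two_mul_sq_mul_factorial_le (m + 2) m
  rw [show m + 2 + 2 * m = 3 * m + 2 by ring, Nat.doubleFactorial_add_two,
    show m + 2 + 1 = m + 1 + 1 + 1 by ring, Nat.factorial_succ (m + 1 + 1),
    Nat.factorial_succ (m + 1), show 3 * m + 2 + 1 = 3 * (m + 1) by ring] at hsq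
  have hfac := nine_mul_factorial_three_mul_mul_succ_le (Nat.le_add_left 1 m)
  have hpoly : 4 * (m + 1) ^ 5 ≤ (3 * m + 2) ^ 2 * (m + 2) ^ 2 * (m + 3) := by
    have : 2 * (m + 1) ≤ 3 * m + 2 := by omega
    calc 4 * (m + 1) ^ 5 = (2 * (m + 1)) ^ 2 * (m + 1) ^ 2 * (m + 1) := by ring
      _ ≤ (3 * m + 2) ^ 2 * (m + 2) ^ 2 * (m + 3) := by gcongr <;> omega
  refine Nat.le_of_mul_le_mul_left (c := 9 * (m + 1)!) ?_ (by positivity)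
  calc 9 * (m + 1)! * (144 * 16 ^ m * (3 * m)‼ ^ 2 * (m + 1) ^ 5)
      = 36 * 16 ^ m * (3 * m)‼ ^ 2 * (4 * (m + 1) ^ 5) * 9 * (m + 1)! := by ring
    _ ≤ 36 * 16 ^ m * (3 * m)‼ ^ 2 * ((3 * m + 2) ^ 2 * (m + 2) ^ 2 * (m + 3)) * 9 * (m + 1)! :=
        by gcongr
    _ = 36 * 16 ^ m * (9 * (m + 2)) *
          (((3 * m + 2) * (3 * m)‼) ^ 2 * ((m + 1 + 1 + 1) * ((m + 1 + 1) * (m + 1)!))) := by ring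
    _ ≤ 36 * 16 ^ m * (9 * (m + 2)) * ((3 * (m + 1))! * (m + 2)‼ ^ 2) :=
        Nat.mul_le_mul_left _ hsq
    _ = 36 * 16 ^ m * (m + 2)‼ ^ 2 * (9 * (3 * (m + 1))! * (m + 1 + 1)) := by ring
    _ ≤ 36 * 16 ^ m * (m + 2)‼ ^ 2 * (4 * 27 ^ (m + 1) * (m + 1)! ^ 3) :=
        Nat.mul_le_mul_left _ hfac
    _ = 9 * (m + 1)! * (432 ^ (m + 1) * (m + 1)! ^ 2 * (m + 2)‼ ^ 2) := by
        rw [show (432 : ℕ) = 16 * 27 by rfl, mul_pow]; ring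

theorem Tfun_one_sq_mul_pow_five_le {n : ℕ} (hn : 1 ≤ n) :
    Tfun n 1 ^ 2 * (n : ℝ) ^ 5 ≤ 432 ^ n / 36 := by
  obtain ⟨m, rfl⟩ := Nat.exists_eq_add_of_le' hn
  have hT : Tfun (m + 1) 1 = 2 * 4 ^ m * (3 * m)‼ / ((m + 1)! * (m + 2)‼) := by
    rw [show Tfun (m + 1) 1 = Tfun (m + 1) (0 + 1) from rfl, Tfun_succ_succ]
    simp only [Nat.cast_zero, Nat.zero_add, Nat.mul_zero, Nat.add_zero, Nat.mul_one,
      Nat.factorial_one, Nat.factorial_two, Nat.cast_one, Nat.cast_ofNat]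
    ring
  have h : (144 * 16 ^ m * (3 * m)‼ ^ 2 * (m + 1) ^ 5 : ℝ) ≤
      432 ^ (m + 1) * (m + 1)! ^ 2 * (m + 2)‼ ^ 2 := by
    exact_mod_cast doubleFactorial_three_mul_sq_le m
  rw [hT, le_div_iff₀ (by norm_num), div_pow, div_mul_eq_mul_div, div_mul_eq_mul_div,
    div_le_iff₀ (by positivity)]
  have h16 : ((4 : ℝ) ^ m) ^ 2 = 16 ^ m := by rw [← pow_mul, mul_comm, pow_mul]; norm_num
  push_cast
  linear_combination h + 144 * ((3 * m)‼ : ℝ) ^ 2 * ((m : ℝ) + 1) ^ 5 * h16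

theorem Tfun_one_le {n : ℕ} (hn : 1 ≤ n) :
    Tfun n 1 ≤ 6⁻¹ * (n : ℝ) ^ (-(5 / 2) : ℝ) * (12 * √3) ^ n := by
  have hn₀ : (0 : ℝ) < n := by exact_mod_cast hn
  have hrpow : ((n : ℝ) ^ (-(5 / 2) : ℝ)) ^ 2 * (n : ℝ) ^ 5 = 1 := by
    rw [← rpow_natCast, ← rpow_mul hn₀.le, ← rpow_natCast (n : ℝ) 5, ← rpow_add hn₀]
    norm_num
  have h432 : ((12 * √3 : ℝ) ^ n) ^ 2 = 432 ^ n := by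
    rw [← pow_mul, mul_comm n 2, pow_mul, mul_pow, sq_sqrt (by norm_num)]
    norm_num
  refine le_of_pow_le_pow_left₀ two_ne_zero (by positivity) ?_
  calc Tfun n 1 ^ 2 = Tfun n 1 ^ 2 * (n : ℝ) ^ 5 * ((n : ℝ) ^ (-(5 / 2) : ℝ)) ^ 2 := by
        rw [mul_assoc, mul_comm ((n : ℝ) ^ 5), hrpow, mul_one]
    _ ≤ 432 ^ n / 36 * ((n : ℝ) ^ (-(5 / 2) : ℝ)) ^ 2 := by
        gcongr; exact Tfun_one_sq_mul_pow_five_le hn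
    _ = (6⁻¹ * (n : ℝ) ^ (-(5 / 2) : ℝ) * (12 * √3) ^ n) ^ 2 := by
        rw [mul_pow, mul_pow, h432]; ring

theorem Cfun_one : Cfun 1 = (6 * √(2 * π))⁻¹ := by
  rw [Cfun]
  norm_num
  ring

/-- There is a constant c > 0, uniform in p, with
T(n,p) ≤ c·C(p)·n^{−5/2}·(12√3)^n for all n, p ≥ 1. -/
theorem T_upper_bound :
    ∃ c : ℝ, 0 < c ∧ ∀ n p : ℕ, 1 ≤ n → 1 ≤ p →
      Tfun n p ≤ c * Cfun p * (n : ℝ) ^ (-(5 / 2) : ℝ) * (12 * Real.sqrt 3) ^ n := by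
  refine ⟨√(2 * π), by positivity, fun n p hn hp => ?_⟩
  have hCp : 0 ≤ Cfun p := by rw [Cfun]; positivity
  have hreduce := Tfun_mul_Cfun_one_le hn hp
  rw [Cfun_one, mul_inv_le_iff₀ (by positivity)] at hreduce
  calc Tfun n p ≤ Tfun n 1 * Cfun p * (6 * √(2 * π)) := hreduce
    _ ≤ 6⁻¹ * (n : ℝ) ^ (-(5 / 2) : ℝ) * (12 * √3) ^ n * Cfun p * (6 * √(2 * π)) := by
        gcongr; exact Tfun_one_le hn
    _ = _ := by ring
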